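/- Let a, b, c, d be nonnegative integers and p an integer. Write the matrix Q = Q(a,b,c,d,p) in block form Q = [[Q2, Q1],[Q3, Q4]], where Q2 is the a×a block Q2_{i,j} = C(b+c, c−i+j), Q1 is the a×d block Q1_{i,j} = C(2j−1, j−i+p), Q3 is the d×a block Q3_{i,j} = C(b+c−2i+1, c−i+j−p), and Q4 is the d×d block Q4_{i,j} = C(2(j−i), j−i). Then Q2 is invertible over ℚ, and setting F := Q4 − Q3·Q2^{−1}·Q1, one has E(a,b,c,d,p) = det F · M(a,b,c) = det F · ∏_{i=0}^{a−1} i!·(b+c+i)!/((b+i)!·(c+i)!). -/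

import Mathlib

open Finset

noncomputable section

/-- Binomial coefficient with integer arguments, equal to `0` whenever `k < 0` or `k > n`. -/
def ibinom (n k : ℤ) : ℚ :=
  if 0 ≤ k ∧ k ≤ n then (n.toNat.choose k.toNat : ℚ) else 0

/-- The Pochhammer symbol (rising factorial) `x (x+1) ⋯ (x+n-1)`. -/
def poch (x : ℚ) (n : ℕ) : ℚ := (ascPochhammer ℚ n).eval x

/-- MacMahon's product `M(a,b,c)`. -/
def macmahon (a b c : ℕ) : ℚ :=
  ∏ i ∈ Finset.range a,
    ((Nat.factorial i : ℚ) * (Nat.factorial (b + c + i) : ℚ)) /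
      ((Nat.factorial (b + i) : ℚ) * (Nat.factorial (c + i) : ℚ))

/-- The matrix `Q(a,b,c,d,p)` (with `1`-based indices `i, j ∈ {1, …, a+d}`):
rows/columns with index `≤ a` are lateral, the rest are intrusive. -/
def Qmat (a b c d : ℕ) (p : ℤ) : Matrix (Fin (a + d)) (Fin (a + d)) ℚ :=
  Matrix.of fun i j =>
    if (i : ℕ) < a then
      if (j : ℕ) < a then
        ibinom ((b : ℤ) + c) ((c : ℤ) - (((i : ℕ) : ℤ) + 1) + (((j : ℕ) : ℤ) + 1))
      else
        ibinom (2 * (((j : ℕ) : ℤ) - a + 1) - 1)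
          ((((j : ℕ) : ℤ) - a + 1) - (((i : ℕ) : ℤ) + 1) + p)
    else
      if (j : ℕ) < a then
        ibinom ((b : ℤ) + c - 2 * (((i : ℕ) : ℤ) - a + 1) + 1)
          ((c : ℤ) - (((i : ℕ) : ℤ) - a + 1) + (((j : ℕ) : ℤ) + 1) - p)
      else
        ibinom (2 * (((j : ℕ) : ℤ) - ((i : ℕ) : ℤ))) (((j : ℕ) : ℤ) - ((i : ℕ) : ℤ))

/-- `E(a,b,c,d,p) = det Q(a,b,c,d,p)`, the signed count of lozenge tilings of the
`(a,b,c)`-hexagon with an even intrusion of length `d` at position `p`. -/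
def E (a b c d : ℕ) (p : ℤ) : ℚ := (Qmat a b c d p).det

/-! Pascal row operations (Vandermonde's convolution) turn `Q₂ = (C(b+c, c-i+j))` into
`(C(b+c+i, c+j))`, whose entries are `(b+c+i)! / ((b+i)! (c+j)!) · (b+i)(b+i-1)⋯(b+i-j+1)`.
The falling factorials form a Vandermonde matrix in the nodes `b+i`, of determinant `∏ i!`,
so `det Q₂ = M(a,b,c) ≠ 0`, and the formula for `E` is the Schur-complement expansion of
`det Q` along the invertible block `Q₂`. -/

open Matrix Nat

lemma ibinom_natCast (n k : ℕ) : ibinom n k = (n.choose k : ℚ) := by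
  rcases le_or_gt k n with h | h
  · simp [ibinom, h]
  · simp [ibinom, Nat.choose_eq_zero_of_lt h, show ¬ (k : ℤ) ≤ n by omega]

lemma ibinom_of_neg {n k : ℤ} (h : k < 0) : ibinom n k = 0 := by
  simp [ibinom, not_le.2 h]

lemma sum_range_choose_mul_ibinom {i N : ℕ} (hi : i < N) (n m : ℕ) :
    ∑ t ∈ range N, (i.choose t : ℚ) * ibinom n ((m : ℤ) - t) = ((i + n).choose m : ℚ) := by
  set f : ℕ → ℚ := fun t => (i.choose t : ℚ) * ibinom n ((m : ℤ) - t)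
  have hN : ∑ t ∈ range N, f t = ∑ t ∈ range (N + m + 1), f t :=
    sum_subset (range_subset_range.2 (by omega)) fun t _ ht => by
      simp [f, Nat.choose_eq_zero_of_lt (show i < t by simp at ht; omega)]
  have hm : ∑ t ∈ range (m + 1), f t = ∑ t ∈ range (N + m + 1), f t :=
    sum_subset (range_subset_range.2 (by omega)) fun t _ ht => by
      simp [f, ibinom_of_neg (show (m : ℤ) - t < 0 by simp at ht; omega)]
  rw [hN, ← hm, Nat.add_choose_eq, Nat.sum_antidiagonal_eq_sum_range_succ_mk]
  push_cast
  refine sum_congr rfl fun t ht => ?_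
  simp only [f]
  rw [show (m : ℤ) - t = ((m - t : ℕ) : ℤ) by simp at ht; omega, ibinom_natCast]

lemma det_pascal (a : ℕ) : (of fun i t : Fin a => ((i : ℕ).choose t : ℚ)).det = 1 := by
  rw [det_of_isLowerTriangular]
  · simp
  · intro i t hit
    simp [Nat.choose_eq_zero_of_lt (show (i : ℕ) < t from hit)]

lemma pascal_mul_ibinom (a n c : ℕ) :
    (of fun i t : Fin a => ((i : ℕ).choose t : ℚ)) *
        (of fun t j : Fin a => ibinom n (((c + j : ℕ) : ℤ) - (t : ℕ))) =
      of fun i j : Fin a => (((i : ℕ) + n).choose (c + j) : ℚ) := by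
  ext i j
  simp only [mul_apply, of_apply]
  rw [Fin.sum_univ_eq_sum_range (fun t => ((i : ℕ).choose t : ℚ) * ibinom n ((c + j : ℕ) - t)) a,
    sum_range_choose_mul_ibinom i.isLt]

lemma Nat.add_choose_add_mul_factorial_mul_factorial (x y j : ℕ) :
    (x + y).choose (y + j) * (y + j)! * x ! = (x + y)! * x.descFactorial j := by
  rcases le_or_gt j x with h | h
  · rw [← Nat.factorial_mul_descFactorial h, ← mul_assoc,
      ← Nat.choose_mul_factorial_mul_factorial (show y + j ≤ x + y by omega),
      show x + y - (y + j) = x - j by omega]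
  · simp [Nat.choose_eq_zero_of_lt (show x + y < y + j by omega),
      Nat.descFactorial_eq_zero_iff_lt.2 h]

lemma det_descPochhammer_eval_add {R : Type*} [CommRing R] [IsDomain R] (a : ℕ) (x : R) :
    (of fun i j : Fin a => (descPochhammer R j).eval ((i : R) + x)).det =
      ∏ i ∈ range a, (i ! : R) := by
  rw [← det_eval_matrixOfPolynomials_eq_det_vandermonde (fun i : Fin a => (i : R) + x) _
      (fun j => descPochhammer_natDegree R j) (fun j => monic_descPochhammer R j),
    det_vandermonde_add]
  cases a with
  | zero => simp
  | succ n =>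
    rw [det_vandermonde_id_eq_superFactorial, ← Nat.prod_range_succ_factorial]
    push_cast
    rfl

lemma det_choose_add_eq_macmahon (a b c : ℕ) :
    (of fun i j : Fin a => (((i : ℕ) + (b + c)).choose (c + j) : ℚ)).det = macmahon a b c := by
  have hfactor : (of fun i j : Fin a => (((i : ℕ) + (b + c)).choose (c + j) : ℚ)) =
      diagonal (fun i : Fin a => (((i + (b + c) : ℕ)! : ℚ) / (b + i)!)) *
        (of fun i j : Fin a => (descPochhammer ℚ j).eval (((i : ℕ) : ℚ) + b)) *
        diagonal (fun j : Fin a => (((c + j : ℕ)! : ℚ)⁻¹)) := by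
    ext i j
    have h := Nat.add_choose_add_mul_factorial_mul_factorial (b + i) c j
    rw [show b + i + c = (i : ℕ) + (b + c) by ring] at h
    rw [mul_diagonal, diagonal_mul, of_apply, of_apply,
      show ((i : ℕ) : ℚ) + b = ((b + i : ℕ) : ℚ) by push_cast; ring,
      descPochhammer_eval_eq_descFactorial]
    field_simp
    rw [mul_right_comm]
    exact_mod_cast h
  rw [hfactor, det_mul, det_mul, det_diagonal, det_diagonal, det_descPochhammer_eval_add, macmahon,
    Fin.prod_univ_eq_prod_range (fun i => (((i + (b + c) : ℕ)! : ℚ) / (b + i)!)),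
    Fin.prod_univ_eq_prod_range (fun j => (((c + j : ℕ)! : ℚ)⁻¹)), ← prod_mul_distrib,
    ← prod_mul_distrib]
  refine prod_congr rfl fun i _ => ?_
  rw [show i + (b + c) = b + c + i by ring]
  field_simp

lemma det_ibinom_eq_macmahon (a b c : ℕ) :
    (of fun i j : Fin a =>
      ibinom ((b : ℤ) + c) ((c : ℤ) - (((i : ℕ) : ℤ) + 1) + (((j : ℕ) : ℤ) + 1))).det =
      macmahon a b c := by
  have hQ : (of fun i j : Fin a =>
      ibinom ((b : ℤ) + c) ((c : ℤ) - (((i : ℕ) : ℤ) + 1) + (((j : ℕ) : ℤ) + 1))) =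
      of fun t j : Fin a => ibinom ((b + c : ℕ) : ℤ) (((c + j : ℕ) : ℤ) - (t : ℕ)) := by
    ext t j
    simp only [of_apply]
    congr 1
    push_cast
    ring
  rw [hQ, ← one_mul (det _), ← det_pascal a, ← det_mul, pascal_mul_ibinom,
    det_choose_add_eq_macmahon]

lemma macmahon_pos (a b c : ℕ) : 0 < macmahon a b c := by
  unfold macmahon
  positivity

/-- Schur-complement evaluation: `E(a,b,c,d,p) = det F · M(a,b,c)` with
`F = Q₄ − Q₃·Q₂⁻¹·Q₁`. -/
theorem E_schur_complement (a b c d : ℕ) (p : ℤ) :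
    let Q2 : Matrix (Fin a) (Fin a) ℚ := Matrix.of fun i j =>
      ibinom ((b : ℤ) + c) ((c : ℤ) - (((i : ℕ) : ℤ) + 1) + (((j : ℕ) : ℤ) + 1))
    let Q1 : Matrix (Fin a) (Fin d) ℚ := Matrix.of fun i j =>
      ibinom (2 * (((j : ℕ) : ℤ) + 1) - 1) ((((j : ℕ) : ℤ) + 1) - (((i : ℕ) : ℤ) + 1) + p)
    let Q3 : Matrix (Fin d) (Fin a) ℚ := Matrix.of fun i j =>
      ibinom ((b : ℤ) + c - 2 * (((i : ℕ) : ℤ) + 1) + 1)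
        ((c : ℤ) - (((i : ℕ) : ℤ) + 1) + (((j : ℕ) : ℤ) + 1) - p)
    let Q4 : Matrix (Fin d) (Fin d) ℚ := Matrix.of fun i j =>
      ibinom (2 * (((j : ℕ) : ℤ) - ((i : ℕ) : ℤ))) (((j : ℕ) : ℤ) - ((i : ℕ) : ℤ))
    IsUnit Q2.det ∧
      E a b c d p = (Q4 - Q3 * Q2⁻¹ * Q1).det * macmahon a b c := by
  intro Q2 Q1 Q3 Q4
  have hQ2 : Q2.det = macmahon a b c := det_ibinom_eq_macmahon a b c
  have hunit : IsUnit Q2.det := hQ2 ▸ (macmahon_pos a b c).ne'.isUnit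
  let := Q2.invertibleOfIsUnitDet hunit
  have hE : E a b c d p = (fromBlocks Q2 Q1 Q3 Q4).det := by
    rw [E, ← det_submatrix_equiv_self finSumFinEquiv]
    congr 1
    ext (i | i) (j | j) <;>
      simp only [submatrix_apply, finSumFinEquiv_apply_left, finSumFinEquiv_apply_right,
        fromBlocks_apply₁₁, fromBlocks_apply₁₂, fromBlocks_apply₂₁, fromBlocks_apply₂₂, Qmat,
        of_apply, Fin.val_castAdd, Fin.val_natAdd, i.isLt, j.isLt, if_true,
        show ¬ a + (i : ℕ) < a by omega, show ¬ a + (j : ℕ) < a by omega, if_false] <;>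
      congr 1 <;> push_cast <;> ring
  refine ⟨hunit, ?_⟩
  rw [hE, det_fromBlocks₁₁, invOf_eq_nonsing_inv, hQ2, mul_comm]
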